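/- Let X be a C*-correspondence over A. An ideal I of A is negatively invariant (i.e., J_X ∩ X⁻¹(I) ⊂ I) if and only if J_X ⊂ J(I) where J(I) = {a ∈ A : [φ_X(a)]_I ∈ K(X_I), a·X⁻¹(I) ⊂ I}. -/

import Mathlib

noncomputable section

/-- A (right) Hilbert C*-module over a C*-algebra `A`. -/
class HilbertModule (A : Type*) [CStarAlgebra A] (X : Type*)
    [NormedAddCommGroup X] [NormedSpace ℂ X] : Type _ where
  rsmul : X → A → X
  inner : X → X → A
  rsmul_add_left : ∀ (x y : X) (a : A), rsmul (x + y) a = rsmul x a + rsmul y a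
  rsmul_add_right : ∀ (x : X) (a b : A), rsmul x (a + b) = rsmul x a + rsmul x b
  rsmul_rsmul : ∀ (x : X) (a b : A), rsmul (rsmul x a) b = rsmul x (a * b)
  rsmul_csmul_left : ∀ (c : ℂ) (x : X) (a : A), rsmul (c • x) a = c • rsmul x a
  rsmul_csmul_right : ∀ (c : ℂ) (x : X) (a : A), rsmul x (c • a) = c • rsmul x a
  inner_add_left : ∀ (x y z : X), inner (x + y) z = inner x z + inner y z
  inner_add_right : ∀ (x y z : X), inner x (y + z) = inner x y + inner x z
  inner_csmul_right : ∀ (c : ℂ) (x y : X), inner x (c • y) = c • inner x y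
  star_inner : ∀ (x y : X), star (inner x y) = inner y x
  inner_rsmul_right : ∀ (x y : X) (a : A), inner x (rsmul y a) = inner x y * a
  inner_self_isPositive : ∀ x : X, ∃ b : A, inner x x = star b * b
  norm_sq_inner : ∀ x : X, ‖x‖ ^ 2 = ‖inner x x‖
  norm_inner_le : ∀ x y : X, ‖inner x y‖ ≤ ‖x‖ * ‖y‖
  norm_rsmul_le : ∀ (x : X) (a : A), ‖rsmul x a‖ ≤ ‖x‖ * ‖a‖

namespace HilbertModule

variable {A : Type*} [CStarAlgebra A] {X : Type*}
  [NormedAddCommGroup X] [NormedSpace ℂ X] [HilbertModule A X]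

/-- The closed submodule `X·S` generated by products `ξ·a`, `a ∈ S`. -/
def idealSub (X : Type*) {A : Type*} [CStarAlgebra A] [NormedAddCommGroup X]
    [NormedSpace ℂ X] [HilbertModule A X] (S : Set A) : Set X :=
  closure (Submodule.span ℂ {x : X | ∃ (ξ : X) (a : A), a ∈ S ∧ x = rsmul ξ a} : Set X)

/-- The rank-one ("theta") operator `ζ ↦ ξ⟨η,ζ⟩`. -/
def rankOne (A : Type*) {X : Type*} [CStarAlgebra A] [NormedAddCommGroup X]
    [NormedSpace ℂ X] [HilbertModule A X] (ξ η : X) : X →L[ℂ] X :=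
  LinearMap.mkContinuous
    { toFun := fun ζ => rsmul ξ (inner (A := A) η ζ)
      map_add' := fun x y => by
        show rsmul ξ (inner (A := A) η (x + y)) = _
        rw [inner_add_right, rsmul_add_right]
      map_smul' := fun c x => by
        show rsmul ξ (inner (A := A) η (c • x)) = _
        simp only [RingHom.id_apply]
        rw [inner_csmul_right, rsmul_csmul_right] }
    (‖ξ‖ * ‖η‖)
    (fun ζ => by
      calc ‖rsmul ξ (inner (A := A) η ζ)‖ ≤ ‖ξ‖ * ‖inner (A := A) η ζ‖ :=
            norm_rsmul_le _ _
        _ ≤ ‖ξ‖ * (‖η‖ * ‖ζ‖) :=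
            mul_le_mul_of_nonneg_left (norm_inner_le _ _) (norm_nonneg _)
        _ = ‖ξ‖ * ‖η‖ * ‖ζ‖ := (mul_assoc _ _ _).symm)

/-- The set of "compact" operators `K(X)`: the closed linear span of rank-one operators. -/
def compacts (A X : Type*) [CStarAlgebra A] [NormedAddCommGroup X]
    [NormedSpace ℂ X] [HilbertModule A X] : Set (X →L[ℂ] X) :=
  closure (Submodule.span ℂ {T : X →L[ℂ] X | ∃ ξ η : X, T = rankOne A ξ η} : Set (X →L[ℂ] X))

/-- `K(X·I)`, viewed inside the operators on `X`: the closed span of rank-one operators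
with both legs in the subset `S`. -/
def compactsOn (A : Type*) {X : Type*} [CStarAlgebra A] [NormedAddCommGroup X]
    [NormedSpace ℂ X] [HilbertModule A X] (S : Set X) : Set (X →L[ℂ] X) :=
  closure (Submodule.span ℂ
    {T : X →L[ℂ] X | ∃ ξ ∈ S, ∃ η ∈ S, T = rankOne A ξ η} : Set (X →L[ℂ] X))

/-- An operator is adjointable if it has an adjoint with respect to the `A`-valued
inner product. -/
def IsAdjointable (A : Type*) {X : Type*} [CStarAlgebra A] [NormedAddCommGroup X]
    [NormedSpace ℂ X] [HilbertModule A X] (S : X →L[ℂ] X) : Prop :=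
  ∃ T : X →L[ℂ] X, ∀ x y : X, inner (A := A) (S x) y = inner (A := A) x (T y)

end HilbertModule

/-- A C*-correspondence over `A`: a Hilbert `A`-module with a left action of `A`
by adjointable operators. -/
class Correspondence (A : Type*) [CStarAlgebra A] (X : Type*)
    [NormedAddCommGroup X] [NormedSpace ℂ X] extends HilbertModule A X where
  lsmul : A → X → X
  lsmul_add_left : ∀ (a b : A) (x : X), lsmul (a + b) x = lsmul a x + lsmul b x
  lsmul_add_right : ∀ (a : A) (x y : X), lsmul a (x + y) = lsmul a x + lsmul a y
  lsmul_mul : ∀ (a b : A) (x : X), lsmul (a * b) x = lsmul a (lsmul b x)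
  lsmul_csmul_left : ∀ (c : ℂ) (a : A) (x : X), lsmul (c • a) x = c • lsmul a x
  lsmul_csmul_right : ∀ (c : ℂ) (a : A) (x : X), lsmul a (c • x) = c • lsmul a x
  inner_lsmul_left : ∀ (a : A) (x y : X), inner (lsmul a x) y = inner x (lsmul (star a) y)
  lsmul_rsmul : ∀ (a : A) (x : X) (b : A), lsmul a (rsmul x b) = rsmul (lsmul a x) b
  norm_lsmul_le : ∀ (a : A) (x : X), ‖lsmul a x‖ ≤ ‖a‖ * ‖x‖

namespace Correspondence

open HilbertModule

variable {A : Type*} [CStarAlgebra A] {X : Type*}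
  [NormedAddCommGroup X] [NormedSpace ℂ X] [Correspondence A X]

/-- The left action `φ_X(a)` as a continuous linear operator on `X`. -/
def lact (A : Type*) {X : Type*} [CStarAlgebra A] [NormedAddCommGroup X]
    [NormedSpace ℂ X] [Correspondence A X] (a : A) : X →L[ℂ] X :=
  LinearMap.mkContinuous
    { toFun := lsmul a
      map_add' := lsmul_add_right a
      map_smul' := fun c x => by
        show lsmul a (c • x) = _
        simp only [RingHom.id_apply]; rw [lsmul_csmul_right] }
    ‖a‖ (norm_lsmul_le a)

/-- The ideal `X(S)`: closed span of `{⟨η, φ_X(a)ξ⟩ : a ∈ S}`. -/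
def corrApply (X : Type*) {A : Type*} [CStarAlgebra A] [NormedAddCommGroup X]
    [NormedSpace ℂ X] [Correspondence A X] (S : Set A) : Set A :=
  closure (Submodule.span ℂ
    {b : A | ∃ a ∈ S, ∃ ξ η : X, b = inner (A := A) η (lsmul a ξ)} : Set A)

/-- The ideal `X⁻¹(S) = {a : ⟨η, φ_X(a)ξ⟩ ∈ S for all ξ, η}`. -/
def corrInv (X : Type*) {A : Type*} [CStarAlgebra A] [NormedAddCommGroup X]
    [NormedSpace ℂ X] [Correspondence A X] (S : Set A) : Set A :=
  {a : A | ∀ ξ η : X, inner (A := A) η (lsmul a ξ) ∈ S}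

/-- The kernel of the left action `φ_X`. -/
def kerLact (X : Type*) {A : Type*} [CStarAlgebra A] [NormedAddCommGroup X]
    [NormedSpace ℂ X] [Correspondence A X] : Set A :=
  {a : A | ∀ ξ : X, lsmul a ξ = 0}

/-- Katsura's ideal `J_X = φ_X⁻¹(K(X)) ∩ (ker φ_X)^⊥`. -/
def JX (X : Type*) {A : Type*} [CStarAlgebra A] [NormedAddCommGroup X]
    [NormedSpace ℂ X] [Correspondence A X] : Set A :=
  {a : A | lact A (X := X) a ∈ compacts A X ∧ ∀ b ∈ kerLact X, a * b = 0}

end Correspondence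

open HilbertModule Correspondence

/-- Data presenting a Hilbert `B`-module `Y` as the quotient `X_I = X/XI` of a Hilbert
`A`-module `X` by a closed two-sided ideal `I` of `A` (with `B` playing the role of `A/I`). -/
structure QuotientData (A B : Type*) [CStarAlgebra A] [CStarAlgebra B]
    (I : TwoSidedIdeal A)
    (X Y : Type*) [NormedAddCommGroup X] [NormedSpace ℂ X] [HilbertModule A X]
    [NormedAddCommGroup Y] [NormedSpace ℂ Y] [HilbertModule B Y] : Type _ where
  π : A →⋆ₐ[ℂ] B
  π_surjective : Function.Surjective π
  π_ker : ∀ a : A, π a = 0 ↔ a ∈ I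
  q : X →ₗ[ℂ] Y
  q_surjective : Function.Surjective q
  q_ker : ∀ ξ : X, q ξ = 0 ↔ ξ ∈ idealSub X (I : Set A)
  q_inner : ∀ ξ ζ : X, inner (A := B) (q ξ) (q ζ) = π (inner (A := A) ξ ζ)
  q_rsmul : ∀ (ξ : X) (a : A), q (rsmul ξ a) = rsmul (q ξ) (π a)


/-- Quotient data compatible with the left actions (presenting `X_I` as a
C*-correspondence over `A/I`). -/
structure CorrQuotientData (A B : Type*) [CStarAlgebra A] [CStarAlgebra B]
    (I : TwoSidedIdeal A)
    (X Y : Type*) [NormedAddCommGroup X] [NormedSpace ℂ X] [Correspondence A X]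
    [NormedAddCommGroup Y] [NormedSpace ℂ Y] [Correspondence B Y]
    extends QuotientData A B I X Y where
  q_lsmul : ∀ (a : A) (ξ : X), q (lsmul a ξ) = lsmul (π a) (q ξ)

/-- Katsura's ideal `J(I) = {a : [φ_X(a)]_I ∈ K(X_I), a·X⁻¹(I) ⊂ I}`, expressed via
quotient data presenting `X_I`. -/
def JofI {A B : Type*} [CStarAlgebra A] [CStarAlgebra B] {I : TwoSidedIdeal A}
    {X Y : Type*} [NormedAddCommGroup X] [NormedSpace ℂ X] [Correspondence A X]
    [NormedAddCommGroup Y] [NormedSpace ℂ Y] [HilbertModule B Y]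
    (D : QuotientData A B I X Y) : Set A :=
  {a : A | (∃ T ∈ compacts B Y, ∀ ξ : X, T (D.q ξ) = D.q (lsmul a ξ)) ∧
    ∀ b ∈ corrInv X (I : Set A), a * b ∈ I}

/-- A Hilbert `A`-bimodule: a C*-correspondence together with a left inner product
satisfying `φ_X(⟪ξ,η⟫) = θ_{ξ,η}`. -/
class HilbertBimodule (A : Type*) [CStarAlgebra A] (X : Type*)
    [NormedAddCommGroup X] [NormedSpace ℂ X] extends Correspondence A X where
  linner : X → X → A
  lsmul_linner : ∀ ξ η ζ : X, lsmul (linner ξ η) ζ = rsmul ξ (inner η ζ)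

/-- The closed subspace `φ_X(S)X`: closed span of `{φ_X(a)ξ : a ∈ S}`. -/
def lsmulSet (X : Type*) {A : Type*} [CStarAlgebra A] [NormedAddCommGroup X]
    [NormedSpace ℂ X] [Correspondence A X] (S : Set A) : Set X :=
  closure (Submodule.span ℂ
    {x : X | ∃ a ∈ S, ∃ ξ : X, x = Correspondence.lsmul a ξ} : Set X)

/-!
`(⇒)`: for `a ∈ J_X` and `b ∈ X⁻¹(I)` the product `ab` lies in `J_X ∩ X⁻¹(I)`, since `J_X` is a
right and `X⁻¹(I)` a left ideal. The operator `φ_X(a)` is a norm limit of finite-rank operators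
`Uₙ`, each of which descends to a finite-rank operator `Sₙ` on `X_I`. The quotient norm is not
available, but `‖Sₙ - Sₘ‖ ≤ ‖Uₙ - Uₘ‖` still holds: for a unit vector `y = q ξ` and `R = S⋆S`,
the C*-inequality `‖R y‖ ^ 2 ≤ ‖R² y‖` iterates to `‖S y‖ ^ 2 ^ (k + 1) ≤ ‖ξ‖ ‖U‖ ^ 2 ^ (k + 1)`,
and taking `2 ^ (k + 1)`-th roots removes `‖ξ‖`. The limit of the `Sₙ` is the compact operator
`[φ_X(a)]_I`.

`(⇐)`: if `a ∈ J_X ∩ X⁻¹(I)` then `a⋆a w ∈ X⁻¹(I)`, so `a a⋆a w ∈ I` for every `w`, and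
`a = lim a a⋆a (a⋆a + δ)⁻¹` as `δ → 0` by the continuous functional calculus.
-/

open HilbertModule Correspondence Filter Topology

lemma le_of_frequently_pow_le_mul_pow {a b C : ℝ} (hb : 0 ≤ b)
    (h : ∃ᶠ n in atTop, a ^ n ≤ C * b ^ n) : a ≤ b := by
  by_contra! hba
  have ha : 0 < a := hb.trans_lt hba
  have hlim : Tendsto (fun n : ℕ => C * (b / a) ^ n) atTop (𝓝 0) := by
    simpa using (tendsto_pow_atTop_nhds_zero_of_lt_one (div_nonneg hb ha.le)
      ((div_lt_one ha).2 hba)).const_mul C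
  refine h ?_
  filter_upwards [hlim.eventually (gt_mem_nhds one_pos)] with n hn
  rw [div_pow, ← mul_div_assoc, div_lt_one (pow_pos ha n)] at hn
  exact not_le.2 hn

namespace HilbertModule

variable {A : Type*} [CStarAlgebra A] {X : Type*}
  [NormedAddCommGroup X] [NormedSpace ℂ X] [HilbertModule A X]

lemma rankOne_apply (ξ η ζ : X) : rankOne A ξ η ζ = rsmul ξ (inner (A := A) η ζ) := rfl

lemma inner_zero_right (x : X) : inner (A := A) x 0 = 0 := by
  simpa using inner_add_right (A := A) x 0 0

lemma inner_zero_left (x : X) : inner (A := A) 0 x = 0 := by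
  rw [← star_inner, inner_zero_right, star_zero]

lemma inner_csmul_left (c : ℂ) (x y : X) :
    inner (A := A) (c • x) y = star c • inner (A := A) x y := by
  rw [← star_inner, inner_csmul_right, star_smul, star_inner]

lemma inner_rsmul_left (x y : X) (a : A) :
    inner (A := A) (rsmul x a) y = star a * inner (A := A) x y := by
  rw [← star_inner, inner_rsmul_right, star_mul, star_inner]

def finiteRank (A X : Type*) [CStarAlgebra A] [NormedAddCommGroup X] [NormedSpace ℂ X]
    [HilbertModule A X] : Submodule ℂ (X →L[ℂ] X) :=
  Submodule.span ℂ {T | ∃ ξ η : X, T = rankOne A ξ η}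

def IsAdjointPair (A : Type*) {X : Type*} [CStarAlgebra A] [NormedAddCommGroup X]
    [NormedSpace ℂ X] [HilbertModule A X] (S T : X →L[ℂ] X) : Prop :=
  ∀ x y : X, inner (A := A) (S x) y = inner (A := A) x (T y)

lemma isAdjointPair_rankOne (ξ η : X) : IsAdjointPair A (rankOne A ξ η) (rankOne A η ξ) :=
  fun x y => by rw [rankOne_apply, rankOne_apply, inner_rsmul_left, inner_rsmul_right, star_inner]

namespace IsAdjointPair

variable {S T S₁ T₁ S₂ T₂ R : X →L[ℂ] X}

lemma symm (h : IsAdjointPair A S T) : IsAdjointPair A T S := fun x y => by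
  rw [← star_inner, ← h, star_inner]

lemma zero : IsAdjointPair A (0 : X →L[ℂ] X) 0 := fun x y => by
  simp only [zero_apply, inner_zero_left, inner_zero_right]

lemma add (h₁ : IsAdjointPair A S₁ T₁) (h₂ : IsAdjointPair A S₂ T₂) :
    IsAdjointPair A (S₁ + S₂) (T₁ + T₂) := fun x y => by
  simp only [add_apply, inner_add_left, inner_add_right, h₁ x y, h₂ x y]

lemma smul (c : ℂ) (h : IsAdjointPair A S T) : IsAdjointPair A (c • S) (star c • T) :=
  fun x y => by simp only [smul_apply, inner_csmul_left, inner_csmul_right, h x y]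

lemma mul (h₁ : IsAdjointPair A S₁ T₁) (h₂ : IsAdjointPair A S₂ T₂) :
    IsAdjointPair A (S₁ * S₂) (T₂ * T₁) :=
  fun _ _ => (h₁ _ _).trans (h₂ _ _)

lemma pow (h : IsAdjointPair A R R) (n : ℕ) : IsAdjointPair A (R ^ n) (R ^ n) := by
  induction n with
  | zero => exact fun _ _ => rfl
  | succ n ih =>
    have := ih.mul h
    rwa [← pow_succ, ← pow_succ'] at this

lemma norm_apply_sq_le (h : IsAdjointPair A S T) (y : X) : ‖S y‖ ^ 2 ≤ ‖y‖ * ‖T (S y)‖ :=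
  calc ‖S y‖ ^ 2 = ‖inner (A := A) (S y) (S y)‖ := norm_sq_inner _
    _ = ‖inner (A := A) y (T (S y))‖ := by rw [h]
    _ ≤ ‖y‖ * ‖T (S y)‖ := norm_inner_le _ _

lemma norm_le (h : IsAdjointPair A S T) : ‖T‖ ≤ ‖S‖ := by
  refine T.opNorm_le_bound (norm_nonneg S) fun y => ?_
  have key : ‖T y‖ * ‖T y‖ ≤ ‖S‖ * ‖y‖ * ‖T y‖ :=
    calc ‖T y‖ * ‖T y‖ = ‖T y‖ ^ 2 := (sq _).symm
      _ ≤ ‖y‖ * ‖S (T y)‖ := h.symm.norm_apply_sq_le y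
      _ ≤ ‖y‖ * (‖S‖ * ‖T y‖) := by gcongr; exact S.le_opNorm _
      _ = ‖S‖ * ‖y‖ * ‖T y‖ := by ring
  rcases (norm_nonneg (T y)).eq_or_lt with h0 | h0
  · rw [← h0]; positivity
  · exact le_of_mul_le_mul_right key h0

lemma norm_apply_pow_le (h : IsAdjointPair A R R) {y : X} (hy : ‖y‖ ≤ 1) (k : ℕ) :
    ‖R y‖ ^ 2 ^ k ≤ ‖(R ^ 2 ^ k) y‖ := by
  induction k with
  | zero => simp
  | succ k ih =>
    calc ‖R y‖ ^ 2 ^ (k + 1) = (‖R y‖ ^ 2 ^ k) ^ 2 := by rw [pow_succ, pow_mul]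
      _ ≤ ‖(R ^ 2 ^ k) y‖ ^ 2 := by gcongr
      _ ≤ ‖y‖ * ‖(R ^ 2 ^ k) ((R ^ 2 ^ k) y)‖ := (h.pow _).norm_apply_sq_le y
      _ ≤ ‖(R ^ 2 ^ (k + 1)) y‖ := by
        rw [pow_succ, pow_mul, sq]
        exact mul_le_of_le_one_left (norm_nonneg _) hy

end IsAdjointPair

lemma exists_isAdjointPair_of_mem_finiteRank {U : X →L[ℂ] X} (hU : U ∈ finiteRank A X) :
    ∃ U' ∈ finiteRank A X, IsAdjointPair A U U' := by
  induction hU using Submodule.span_induction with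
  | mem _ h =>
    obtain ⟨ξ, η, rfl⟩ := h
    exact ⟨_, Submodule.subset_span ⟨η, ξ, rfl⟩, isAdjointPair_rankOne ξ η⟩
  | zero => exact ⟨0, zero_mem _, .zero⟩
  | add _ _ _ _ h₁ h₂ =>
    obtain ⟨V₁, hV₁, h₁⟩ := h₁
    obtain ⟨V₂, hV₂, h₂⟩ := h₂
    exact ⟨V₁ + V₂, add_mem hV₁ hV₂, h₁.add h₂⟩
  | smul c _ _ h =>
    obtain ⟨V, hV, h⟩ := h
    exact ⟨star c • V, Submodule.smul_mem _ _ hV, h.smul c⟩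

lemma mul_mem_compacts {T V V' : X →L[ℂ] X} (hT : T ∈ compacts A X)
    (hV : IsAdjointPair A V V') : T * V ∈ compacts A X := by
  have hmaps : Set.MapsTo (· * V) (finiteRank A X : Set (X →L[ℂ] X)) (finiteRank A X) :=
    fun U hU => by
      induction hU using Submodule.span_induction with
      | mem _ h =>
        obtain ⟨ξ, η, rfl⟩ := h
        refine Submodule.subset_span ⟨ξ, V' η, ?_⟩
        ext ζ
        exact congrArg (rsmul ξ) (hV.symm η ζ).symm
      | zero => simp
      | add _ _ _ _ h₁ h₂ => simpa [add_mul] using add_mem h₁ h₂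
      | smul c _ _ h => simpa using Submodule.smul_mem _ c h
  exact map_mem_closure (f := (· * V)) (continuous_mul_const V) hT hmaps

end HilbertModule

namespace Correspondence

variable {A : Type*} [CStarAlgebra A] {X : Type*}
  [NormedAddCommGroup X] [NormedSpace ℂ X] [Correspondence A X]

lemma lsmul_zero (a : A) : lsmul a (0 : X) = 0 := by
  simpa using lsmul_add_right a (0 : X) 0

lemma isAdjointPair_lact (a : A) : IsAdjointPair A (lact A (X := X) a) (lact A (star a)) :=
  inner_lsmul_left a

lemma lact_mul (a b : A) : lact A (X := X) (a * b) = lact A a * lact A b := by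
  ext ζ
  exact lsmul_mul a b ζ

lemma mul_mem_corrInv_left {S : Set A} {b : A} (hb : b ∈ corrInv X S) (x : A) :
    x * b ∈ corrInv X S := fun ξ η => by
  rw [lsmul_mul, ← star_inner, inner_lsmul_left, star_inner]
  exact hb ξ _

lemma mul_mem_corrInv_right {S : Set A} {b : A} (hb : b ∈ corrInv X S) (x : A) :
    b * x ∈ corrInv X S := fun ξ η => by
  rw [lsmul_mul]
  exact hb _ _

lemma mul_mem_JX {a : A} (ha : a ∈ JX X) (b : A) : a * b ∈ JX X := by
  refine ⟨?_, fun c hc => ?_⟩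
  · rw [lact_mul]
    exact mul_mem_compacts ha.1 (isAdjointPair_lact b)
  · rw [mul_assoc]
    exact ha.2 _ fun ξ => by rw [lsmul_mul, hc, lsmul_zero]

end Correspondence

namespace QuotientData

variable {A B : Type*} [CStarAlgebra A] [CStarAlgebra B] {I : TwoSidedIdeal A}
  {X Y : Type*} [NormedAddCommGroup X] [NormedSpace ℂ X] [HilbertModule A X]
  [NormedAddCommGroup Y] [NormedSpace ℂ Y] [HilbertModule B Y]
  (D : QuotientData A B I X Y)

lemma norm_q_le (ξ : X) : ‖D.q ξ‖ ≤ ‖ξ‖ := by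
  have h : ‖D.q ξ‖ ^ 2 ≤ ‖ξ‖ ^ 2 := by
    rw [norm_sq_inner (A := B), norm_sq_inner (A := A), D.q_inner]
    exact NonUnitalStarAlgHom.norm_apply_le D.π _
  exact (pow_le_pow_iff_left₀ (norm_nonneg _) (norm_nonneg _) two_ne_zero).1 h

lemma continuous_q : Continuous D.q :=
  AddMonoidHomClass.continuous_of_bound D.q 1 fun ξ => by simpa using D.norm_q_le ξ

def Induces (T : X →L[ℂ] X) (S : Y →L[ℂ] Y) : Prop :=
  ∀ ξ : X, S (D.q ξ) = D.q (T ξ)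

namespace Induces

variable {D} {T T' T₁ T₂ : X →L[ℂ] X} {S S' S₁ S₂ : Y →L[ℂ] Y}

lemma sub (h₁ : D.Induces T₁ S₁) (h₂ : D.Induces T₂ S₂) : D.Induces (T₁ - T₂) (S₁ - S₂) :=
  fun ξ => by simp only [sub_apply, h₁ ξ, h₂ ξ, map_sub]

lemma mul (h₁ : D.Induces T₁ S₁) (h₂ : D.Induces T₂ S₂) : D.Induces (T₁ * T₂) (S₁ * S₂) :=
  fun ξ => (congrArg S₁ (h₂ ξ)).trans (h₁ _)

lemma pow (h : D.Induces T S) (n : ℕ) : D.Induces (T ^ n) (S ^ n) := by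
  induction n with
  | zero => exact fun _ => rfl
  | succ n ih => simpa only [pow_succ] using ih.mul h

lemma isAdjointPair (hT : IsAdjointPair A T T') (hS : D.Induces T S) (hS' : D.Induces T' S') :
    IsAdjointPair B S S' := by
  intro y z
  obtain ⟨ξ, rfl⟩ := D.q_surjective y
  obtain ⟨ζ, rfl⟩ := D.q_surjective z
  rw [hS, hS', D.q_inner, D.q_inner, hT]

lemma norm_le (hT : IsAdjointPair A T T') (hS : D.Induces T S) (hS' : D.Induces T' S') :
    ‖S‖ ≤ ‖T‖ := by
  refine ContinuousLinearMap.opNorm_le_of_unit_norm (norm_nonneg T) fun y hy => ?_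
  obtain ⟨ξ, rfl⟩ := D.q_surjective y
  have hadj := hS.isAdjointPair hT hS'
  have hR : IsAdjointPair B (S' * S) (S' * S) := hadj.symm.mul hadj
  have hpow (k : ℕ) : (‖S (D.q ξ)‖ ^ 2) ^ 2 ^ k ≤ ‖ξ‖ * (‖T‖ ^ 2) ^ 2 ^ k :=
    calc (‖S (D.q ξ)‖ ^ 2) ^ 2 ^ k ≤ ‖(S' * S) (D.q ξ)‖ ^ 2 ^ k := by
          gcongr
          simpa [hy] using hadj.norm_apply_sq_le (D.q ξ)
      _ ≤ ‖((S' * S) ^ 2 ^ k) (D.q ξ)‖ := hR.norm_apply_pow_le hy.le k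
      _ = ‖D.q (((T' * T) ^ 2 ^ k) ξ)‖ := by rw [(hS'.mul hS).pow _ ξ]
      _ ≤ ‖(T' * T) ^ 2 ^ k‖ * ‖ξ‖ := (D.norm_q_le _).trans (ContinuousLinearMap.le_opNorm _ _)
      _ ≤ ‖T' * T‖ ^ 2 ^ k * ‖ξ‖ := by gcongr; exact norm_pow_le' _ (by positivity)
      _ ≤ (‖T‖ ^ 2) ^ 2 ^ k * ‖ξ‖ := by
          gcongr
          exact (norm_mul_le _ _).trans (by rw [sq]; gcongr; exact hT.norm_le)
      _ = ‖ξ‖ * (‖T‖ ^ 2) ^ 2 ^ k := mul_comm _ _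
  have hsq : ‖S (D.q ξ)‖ ^ 2 ≤ ‖T‖ ^ 2 := le_of_frequently_pow_le_mul_pow (by positivity)
    ((tendsto_pow_atTop_atTop_of_one_lt one_lt_two).frequently (Frequently.of_forall hpow))
  exact (pow_le_pow_iff_left₀ (norm_nonneg _) (norm_nonneg _) two_ne_zero).1 hsq

lemma of_tendsto {u : ℕ → X →L[ℂ] X} {v : ℕ → Y →L[ℂ] Y} (hu : Tendsto u atTop (𝓝 T))
    (hv : Tendsto v atTop (𝓝 S)) (h : ∀ n, D.Induces (u n) (v n)) : D.Induces T S := fun ξ =>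
  tendsto_nhds_unique (((continuous_eval_const _).tendsto S).comp hv) <|
    ((D.continuous_q.tendsto _).comp (((continuous_eval_const ξ).tendsto T).comp hu)).congr
      fun n => (h n ξ).symm

end Induces

lemma exists_induces_of_mem_finiteRank {U : X →L[ℂ] X} (hU : U ∈ finiteRank A X) :
    ∃ S ∈ finiteRank B Y, D.Induces U S := by
  induction hU using Submodule.span_induction with
  | mem _ h =>
    obtain ⟨ξ, η, rfl⟩ := h
    refine ⟨rankOne B (D.q ξ) (D.q η), Submodule.subset_span ⟨_, _, rfl⟩, fun ζ => ?_⟩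
    rw [rankOne_apply, rankOne_apply, D.q_inner, D.q_rsmul]
  | zero => exact ⟨0, zero_mem _, fun ξ => by simp⟩
  | add _ _ _ _ h₁ h₂ =>
    obtain ⟨S₁, hS₁, h₁⟩ := h₁
    obtain ⟨S₂, hS₂, h₂⟩ := h₂
    exact ⟨S₁ + S₂, add_mem hS₁ hS₂, fun ξ => by simp [h₁ ξ, h₂ ξ]⟩
  | smul c _ _ h =>
    obtain ⟨S, hS, h⟩ := h
    exact ⟨c • S, Submodule.smul_mem _ c hS, fun ξ => by simp [h ξ]⟩

variable {D} in
lemma Induces.norm_le_of_mem_finiteRank {U : X →L[ℂ] X} {S : Y →L[ℂ] Y}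
    (hS : D.Induces U S) (hU : U ∈ finiteRank A X) : ‖S‖ ≤ ‖U‖ := by
  obtain ⟨U', hU', hadj⟩ := exists_isAdjointPair_of_mem_finiteRank hU
  obtain ⟨S', -, hS'⟩ := D.exists_induces_of_mem_finiteRank hU'
  exact hS.norm_le hadj hS'

lemma exists_induces_of_mem_compacts [CompleteSpace Y] {T : X →L[ℂ] X}
    (hT : T ∈ compacts A X) : ∃ S ∈ compacts B Y, D.Induces T S := by
  obtain ⟨u, hu, hlim⟩ := mem_closure_iff_seq_limit.1 hT
  choose v hv hind using fun n => D.exists_induces_of_mem_finiteRank (hu n)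
  have hcauchy : CauchySeq v := by
    refine Metric.cauchySeq_iff.2 fun ε hε => ?_
    obtain ⟨N, hN⟩ := Metric.cauchySeq_iff.1 hlim.cauchySeq ε hε
    refine ⟨N, fun m hm n hn => ?_⟩
    rw [dist_eq_norm]
    calc ‖v m - v n‖ ≤ ‖u m - u n‖ :=
          ((hind m).sub (hind n)).norm_le_of_mem_finiteRank (sub_mem (hu m) (hu n))
      _ = dist (u m) (u n) := (dist_eq_norm _ _).symm
      _ < ε := hN m hm n hn
  obtain ⟨S, hS⟩ := cauchySeq_tendsto_of_complete hcauchy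
  exact ⟨S, mem_closure_of_tendsto hS (.of_forall hv), Induces.of_tendsto hlim hS hind⟩

end QuotientData

section CStarAlgebra

variable {A : Type*} [CStarAlgebra A]

lemma exists_norm_sub_mul_star_mul_self_mul_sq_le (a : A) {δ : ℝ} (hδ : 0 < δ) :
    ∃ w : A, ‖a - a * (star a * a * w)‖ ^ 2 ≤ δ := by
  set c := star a * a
  have hpos (t : ℝ) (ht : t ∈ spectrum ℝ c) : 0 < t + δ := by
    linarith [spectrum_star_mul_self_nonneg t ht]
  let f : ℝ → ℝ := fun t => δ / (t + δ)
  have hf : ContinuousOn f (spectrum ℝ c) :=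
    continuousOn_const.div (by fun_prop) fun t ht => (hpos t ht).ne'
  have hg : ContinuousOn (fun t : ℝ => (t + δ)⁻¹) (spectrum ℝ c) :=
    (continuousOn_id.add continuousOn_const).inv₀ fun t ht => (hpos t ht).ne'
  refine ⟨cfc (fun t : ℝ => (t + δ)⁻¹) c, ?_⟩
  have hsub : a - a * (c * cfc (fun t : ℝ => (t + δ)⁻¹) c) = a * cfc f c := by
    have : cfc f c = cfc (fun t : ℝ => 1 - t * (t + δ)⁻¹) c := cfc_congr fun t ht => by
      have := (hpos t ht).ne'
      simp only [f]
      field_simp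
      ring
    rw [this, cfc_sub (fun _ => 1) (fun t => t * (t + δ)⁻¹) c continuousOn_const
      (continuousOn_id.mul hg), cfc_const_one ℝ c, cfc_mul (fun t => t) _ c continuousOn_id hg,
      cfc_id' ℝ c, mul_sub, mul_one]
  have hnorm : ‖a * cfc f c‖ ^ 2 = ‖cfc (fun t => f t * t * f t) c‖ := by
    rw [sq, ← CStarRing.norm_star_mul_self, star_mul, (cfc_predicate f c).star_eq,
      mul_assoc, ← mul_assoc (star a), cfc_mul (fun t => f t * t) f c (hf.mul continuousOn_id) hf,
      cfc_mul f (fun t => t) c hf continuousOn_id, cfc_id' ℝ c, ← mul_assoc (cfc f c)]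
  rw [hsub, hnorm]
  refine norm_cfc_le hδ.le fun t ht => ?_
  have ht0 := spectrum_star_mul_self_nonneg t ht
  have hsq : f t * t * f t = δ * (δ * t / (t + δ) ^ 2) := by
    have := (hpos t ht).ne'
    simp only [f]
    field_simp
  have hle : δ * t / (t + δ) ^ 2 ≤ 1 := by
    rw [div_le_one (pow_pos (hpos t ht) 2)]
    nlinarith
  rw [hsq, Real.norm_of_nonneg (by positivity)]
  exact mul_le_of_le_one_right hδ.le hle

lemma mem_closure_range_mul_star_mul_self_mul (a : A) :
    a ∈ closure (Set.range fun w : A => a * (star a * a * w)) := by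
  refine Metric.mem_closure_iff.2 fun ε hε => ?_
  obtain ⟨w, hw⟩ := exists_norm_sub_mul_star_mul_self_mul_sq_le a (by positivity : 0 < ε ^ 2 / 2)
  refine ⟨_, ⟨w, rfl⟩, ?_⟩
  rw [dist_eq_norm]
  exact lt_of_pow_lt_pow_left₀ 2 hε.le (by linarith [pow_pos hε 2])

end CStarAlgebra

open HilbertModule Correspondence in
theorem stmt13_general {A B : Type*} [CStarAlgebra A] [CStarAlgebra B]
    {X Y : Type*} [NormedAddCommGroup X] [NormedSpace ℂ X] [Correspondence A X]
    [NormedAddCommGroup Y] [NormedSpace ℂ Y] [HilbertModule B Y]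
    [CompleteSpace Y]
    (I : TwoSidedIdeal A) (hI : IsClosed (I : Set A))
    (D : QuotientData A B I X Y) :
    JX X ∩ corrInv X (I : Set A) ⊆ (I : Set A) ↔ JX X ⊆ JofI D := by
  constructor
  · intro hneg a ha
    obtain ⟨S, hS, hind⟩ := D.exists_induces_of_mem_compacts ha.1
    exact ⟨⟨S, hS, hind⟩, fun b hb => hneg ⟨mul_mem_JX ha b, mul_mem_corrInv_left hb a⟩⟩
  · rintro hJ a ⟨haJ, haI⟩
    have hmul (w : A) : a * (star a * a * w) ∈ I :=
      (hJ haJ).2 _ (mul_mem_corrInv_right (mul_mem_corrInv_left haI _) w)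
    rw [← hI.closure_eq]
    exact closure_mono (Set.range_subset_iff.2 hmul) (mem_closure_range_mul_star_mul_self_mul a)

open HilbertModule Correspondence in
/-- an ideal `I` is negatively invariant (`J_X ∩ X⁻¹(I) ⊂ I`) if and
only if `J_X ⊂ J(I)`. -/
theorem stmt13 {A B : Type*} [CStarAlgebra A] [CStarAlgebra B]
    {X Y : Type*} [NormedAddCommGroup X] [NormedSpace ℂ X] [Correspondence A X]
    [NormedAddCommGroup Y] [NormedSpace ℂ Y] [HilbertModule B Y]
    [CompleteSpace X] [CompleteSpace Y]
    (I : TwoSidedIdeal A) (hI : IsClosed (I : Set A))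
    (D : QuotientData A B I X Y) :
    JX X ∩ corrInv X (I : Set A) ⊆ (I : Set A) ↔ JX X ⊆ JofI D :=
  stmt13_general I hI D
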